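/- arXiv:1210.5032 — 5 statements merged into one kernel-verified Lean document; each statement's English description precedes it below -/
import Mathlib

section
/- For any positive reals a and b and any real S ≥ 1, (a+b)^S ≤ 2^S b^S + a^S (1 + 2^(S+1) b / a). -/
/-!
If `a ≤ b` then `(a + b)^S ≤ (2b)^S`. If `b ≤ a`, write `a + b = a (1 + t)` with `t = b / a ∈ [0, 1]`;
convexity of `x ↦ x^S` on `[1, 2]` bounds `(1 + t)^S` by the chord `1 + (2^S - 1) t ≤ 1 + 2^(S+1) t`.
-/

open Real

lemma one_add_rpow_le_chord {p t : ℝ} (hp : 1 ≤ p) (ht₀ : 0 ≤ t) (ht₁ : t ≤ 1) :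
    (1 + t) ^ p ≤ 1 + (2 ^ p - 1) * t := by
  have chord := (convexOn_rpow hp).2 (x := 1) (y := 2) (by norm_num) (by norm_num)
    (sub_nonneg.2 ht₁) ht₀ (sub_add_cancel 1 t)
  simp only [smul_eq_mul, one_rpow, show (1 - t) * 1 + t * 2 = 1 + t by ring] at chord
  linarith

lemma add_rpow_le_rpow_mul_chord {p a b : ℝ} (hp : 1 ≤ p) (ha : 0 < a) (hb : 0 ≤ b) (hba : b ≤ a) :
    (a + b) ^ p ≤ a ^ p * (1 + (2 ^ p - 1) * b / a) := by
  have hsplit : a + b = a * (1 + b / a) := by field_simp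
  rw [hsplit, mul_rpow ha.le (by positivity), mul_div_assoc]
  exact mul_le_mul_of_nonneg_left
    (one_add_rpow_le_chord hp (by positivity) ((div_le_one ha).2 hba)) (by positivity)

lemma add_rpow_le_two_rpow_mul_rpow_of_le {p a b : ℝ} (hp : 0 ≤ p) (ha : 0 ≤ a) (hab : a ≤ b) :
    (a + b) ^ p ≤ 2 ^ p * b ^ p := by
  rw [← mul_rpow zero_le_two (ha.trans hab)]
  exact rpow_le_rpow (by linarith) (by linarith) hp

theorem stmt0 (a b S : ℝ) (ha : 0 < a) (hb : 0 < b) (hS : 1 ≤ S) :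
    (a + b) ^ S ≤ 2 ^ S * b ^ S + a ^ S * (1 + 2 ^ (S + 1) * b / a) := by
  rcases le_total a b with hab | hba
  · have hrest : 0 ≤ a ^ S * (1 + 2 ^ (S + 1) * b / a) := by positivity
    linarith [add_rpow_le_two_rpow_mul_rpow_of_le (p := S) (by linarith) ha.le hab]
  · have hcoeff : 2 ^ S - 1 ≤ (2 : ℝ) ^ (S + 1) := by
      rw [rpow_add_one two_ne_zero]
      linarith [rpow_pos_of_pos two_pos S]
    have hchord : a ^ S * (1 + (2 ^ S - 1) * b / a) ≤ a ^ S * (1 + 2 ^ (S + 1) * b / a) := by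
      gcongr
    have hfirst : 0 ≤ 2 ^ S * b ^ S := by positivity
    linarith [add_rpow_le_rpow_mul_chord hS ha hb.le hba]
end

section
/- For any non-increasing positive function h on the positive reals and any positive real γ, the series ∑_{n≥1} n^{-1} h(n^γ) converges if and only if ∑_{n≥1} n^{-1} h(n) converges. -/
/-!
By Cauchy condensation, `∑ n⁻¹ g(n)` converges iff `∑ₖ g(2ᵏ)` does, for any non-increasing
`g ≥ 0`. Applied to `g(x) = h(x ^ γ)` and to `g = h`, the two series become `∑ₖ h((2 ^ γ)ᵏ)`
and `∑ₖ h(2ᵏ)`. For bases `a, b > 1` the series `∑ₖ h(aᵏ)` and `∑ₖ h(bᵏ)` converge together: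
if `a ≤ bᵐ` then `h(b^(mk)) ≤ h(aᵏ)`, and a non-increasing sequence is summable as soon as its
subsequence along the multiples of `m` is.
-/

open Set

theorem Antitone.summable_of_summable_comp_mul {f : ℕ → ℝ} (hf : Antitone f) {m : ℕ}
    (hm : m ≠ 0) (hs : Summable fun n => f (m * n)) : Summable f := by
  have : NeZero m := ⟨hm⟩
  rw [← summable_indicator_mod_iff hf (0 : ZMod m)]
  simpa using (summable_indicator_mod_iff_summable m 0 f).2 hs

namespace AntitoneOn

variable {h : ℝ → ℝ}

theorem summable_comp_pow_of_summable_comp_pow (hmono : AntitoneOn h (Ici 0))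
    (hnonneg : ∀ x, 0 ≤ x → 0 ≤ h x) {a b : ℝ} (ha : 1 < a) (hb : 1 < b)
    (hs : Summable fun k : ℕ => h (a ^ k)) : Summable fun k : ℕ => h (b ^ k) := by
  obtain ⟨m, ham⟩ := pow_unbounded_of_one_lt a hb
  have hm : m ≠ 0 := by
    rintro rfl
    rw [pow_zero] at ham
    linarith
  have hanti : Antitone fun k : ℕ => h (b ^ k) := fun i j hij =>
    hmono (mem_Ici.2 (by positivity)) (mem_Ici.2 (by positivity))
      (pow_le_pow_right₀ hb.le hij)
  refine hanti.summable_of_summable_comp_mul hm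
    (hs.of_nonneg_of_le (fun k => hnonneg _ (by positivity)) fun k => ?_)
  rw [pow_mul]
  exact hmono (mem_Ici.2 (by positivity)) (mem_Ici.2 (by positivity))
    (pow_le_pow_left₀ (by linarith) ham.le k)

theorem summable_comp_pow_iff (hmono : AntitoneOn h (Ici 0))
    (hnonneg : ∀ x, 0 ≤ x → 0 ≤ h x) {a b : ℝ} (ha : 1 < a) (hb : 1 < b) :
    (Summable fun k : ℕ => h (a ^ k)) ↔ Summable fun k : ℕ => h (b ^ k) :=
  ⟨hmono.summable_comp_pow_of_summable_comp_pow hnonneg ha hb,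
    hmono.summable_comp_pow_of_summable_comp_pow hnonneg hb ha⟩

theorem summable_inv_mul_iff_summable_comp_two_pow (hmono : AntitoneOn h (Ici 0))
    (hnonneg : ∀ x, 0 ≤ x → 0 ≤ h x) :
    Summable (fun n : ℕ => ((n + 1 : ℝ))⁻¹ * h ((n : ℝ) + 1)) ↔
      Summable fun k : ℕ => h (2 ^ k) := by
  set f : ℕ → ℝ := fun n => (n : ℝ)⁻¹ * h n
  have hf_nonneg : ∀ n, 0 ≤ f n := fun n =>
    mul_nonneg (by positivity) (hnonneg _ n.cast_nonneg)
  have hf_anti : ∀ ⦃m n⦄, 0 < m → m ≤ n → f n ≤ f m := fun m n hm hmn => by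
    have hmn' : (m : ℝ) ≤ n := by exact_mod_cast hmn
    exact mul_le_mul (inv_anti₀ (by exact_mod_cast hm) hmn')
      (hmono (mem_Ici.2 m.cast_nonneg) (mem_Ici.2 n.cast_nonneg) hmn')
      (hnonneg _ n.cast_nonneg) (by positivity)
  have hcond : ∀ k : ℕ, (2 : ℝ) ^ k * f (2 ^ k) = h (2 ^ k) := fun k => by
    simp only [f, Nat.cast_pow, Nat.cast_ofNat]
    rw [← mul_assoc, mul_inv_cancel₀ (by positivity), one_mul]
  have hshift : (fun n : ℕ => ((n + 1 : ℝ))⁻¹ * h ((n : ℝ) + 1)) = fun n => f (n + 1) := by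
    simp only [f, Nat.cast_add, Nat.cast_one]
  rw [hshift, summable_nat_add_iff 1, ← summable_condensed_iff_of_nonneg hf_nonneg hf_anti]
  simp only [hcond]

theorem comp_rpow (hmono : AntitoneOn h (Ici 0)) {γ : ℝ} (hγ : 0 ≤ γ) :
    AntitoneOn (fun x => h (x ^ γ)) (Ici 0) := fun _ hx _ hy hxy =>
  hmono (mem_Ici.2 (Real.rpow_nonneg hx γ)) (mem_Ici.2 (Real.rpow_nonneg hy γ))
    (Real.rpow_le_rpow hx hxy hγ)

end AntitoneOn

theorem stmt1 (h : ℝ → ℝ) (γ : ℝ) (hγ : 0 < γ)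
    (hpos : ∀ x, 0 ≤ x → 0 < h x) (hmono : AntitoneOn h (Set.Ici (0 : ℝ))) :
    Summable (fun n : ℕ => ((n + 1 : ℝ))⁻¹ * h (((n : ℝ) + 1) ^ γ)) ↔
      Summable (fun n : ℕ => ((n + 1 : ℝ))⁻¹ * h ((n : ℝ) + 1)) := by
  have hnonneg : ∀ x, 0 ≤ x → 0 ≤ h x := fun x hx => (hpos x hx).le
  rw [(hmono.comp_rpow hγ.le).summable_inv_mul_iff_summable_comp_two_pow
      (fun x hx => hnonneg _ (Real.rpow_nonneg hx γ)),
    hmono.summable_inv_mul_iff_summable_comp_two_pow hnonneg]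
  simp only [← Real.rpow_pow_comm zero_le_two]
  exact hmono.summable_comp_pow_iff hnonneg (Real.one_lt_rpow one_lt_two hγ) one_lt_two
end

section
/- Let (X_n)_{n≥1} be random variables with common distribution equal to that of X_0, where E(X_0² L(X_0)/L(L(X_0))) < ∞ with L(x) = log(e + |x|). For γ > 0, define X*_ℓ = X_ℓ 1_{|X_ℓ| > 2^{γr}} − E(X_ℓ 1_{|X_ℓ| > 2^{γr}}) for ℓ ∈ {2^r, …, 2^{r+1}−1}. Then ∑_{n≥4} E((X*_n)²)/(n log log n) < ∞. -/
/-!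
Centering does not increase the second moment, so for `ℓ` in the dyadic block
`[2^r, 2^(r+1))` the summand is at most `5 G(r) / (2^r log(e + r))`, where
`G(r) = E(X₀² 1_{|X₀| > 2^(γr)})`. A block has fewer than `2^(r+1)` members, so the series
is dominated by `∑_r G(r) / log(e + r) = E(X₀² ∑_{r : 2^(γr) < |X₀|} 1/log(e + r))`
(Fubini). The inner sum runs over `r ≲ L(X₀)/γ`; splitting it at the square root of its
length, the short part is `O(√·)` and every term of the long part is `O(1/log(length))`,
so it is `O(L(X₀)/L(L(X₀)))`.
-/

open MeasureTheory ProbabilityTheory Real Finset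

/-- The function `L` of the paper. -/
noncomputable def logEAbs (x : ℝ) : ℝ := log (exp 1 + |x|)

noncomputable def tailPart (c x : ℝ) : ℝ := if c < |x| then x else 0

lemma one_le_log_exp_add {x : ℝ} (hx : 0 ≤ x) : 1 ≤ log (exp 1 + x) := by
  rw [le_log_iff_exp_le (by positivity)]
  linarith

lemma one_le_logEAbs (x : ℝ) : 1 ≤ logEAbs x := one_le_log_exp_add (abs_nonneg x)

lemma log_exp_add_le_one_add {x : ℝ} (hx : 0 ≤ x) : log (exp 1 + x) ≤ 1 + x := by
  rw [log_le_iff_le_exp (by positivity), exp_add]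
  nlinarith [add_one_le_exp x, exp_pos x, exp_one_gt_d9]

lemma logEAbs_logEAbs_le (x : ℝ) : logEAbs (logEAbs x) ≤ 2 * logEAbs x := by
  have h := one_le_logEAbs x
  have : logEAbs (logEAbs x) ≤ 1 + logEAbs x := by
    rw [logEAbs, abs_of_nonneg (by linarith)]
    exact log_exp_add_le_one_add (by linarith)
  linarith

lemma sq_le_two_mul_sq_mul_logEAbs_div (y : ℝ) :
    y ^ 2 ≤ 2 * (y ^ 2 * logEAbs y / logEAbs (logEAbs y)) := by
  have h : 1 ≤ 2 * logEAbs y / logEAbs (logEAbs y) :=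
    (one_le_div₀ (zero_lt_one.trans_le (one_le_logEAbs _))).mpr (logEAbs_logEAbs_le y)
  calc y ^ 2 ≤ y ^ 2 * (2 * logEAbs y / logEAbs (logEAbs y)) :=
        le_mul_of_one_le_right (sq_nonneg y) h
    _ = 2 * (y ^ 2 * logEAbs y / logEAbs (logEAbs y)) := by ring

lemma log_exp_add_le_four_mul_sqrt {w : ℝ} (hw : 1 ≤ w) : log (exp 1 + w) ≤ 4 * √w := by
  have hsqrt : √(exp 1 + w) ≤ 2 * √w := by
    rw [show (2 : ℝ) * √w = √(4 * w) by
      rw [sqrt_mul (by norm_num), show (4 : ℝ) = 2 ^ 2 by norm_num, sqrt_sq (by norm_num)]]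
    exact sqrt_le_sqrt (by linarith [exp_one_lt_d9])
  calc log (exp 1 + w) ≤ (exp 1 + w) ^ (1 / 2 : ℝ) / (1 / 2) :=
        log_le_rpow_div (by positivity) (by norm_num)
    _ = 2 * √(exp 1 + w) := by rw [← sqrt_eq_rpow]; ring
    _ ≤ 4 * √w := by linarith

lemma inv_log_exp_add_le (r : ℕ) {w : ℝ} (hw : 0 ≤ w) :
    (log (exp 1 + r))⁻¹ ≤ (if (r : ℝ) ≤ √w then 1 else 0) + 2 / log (exp 1 + w) := by
  have hr := one_le_log_exp_add r.cast_nonneg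
  have hw' := one_le_log_exp_add hw
  split_ifs with h
  · have : 0 ≤ 2 / log (exp 1 + w) := by positivity
    linarith [inv_le_one_of_one_le₀ hr]
  · have hsq : w < (r : ℝ) ^ 2 := by
      rwa [← sqrt_lt' (by linarith [sqrt_nonneg w]), ← not_le]
    have : log (exp 1 + w) ≤ 2 * log (exp 1 + r) := by
      have := log_le_log (by positivity) (show exp 1 + w ≤ (exp 1 + r) ^ 2 by
        nlinarith [exp_one_gt_d9])
      rwa [log_pow, Nat.cast_ofNat] at this
    rw [zero_add, inv_eq_one_div, div_le_div_iff₀ (by linarith) (by linarith)]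
    linarith

lemma sum_range_inv_log_exp_add_le (N : ℕ) {w : ℝ} (hN : (N : ℝ) ≤ w) (hw : 1 ≤ w) :
    ∑ r ∈ range N, (log (exp 1 + r))⁻¹ ≤ 10 * (w / log (exp 1 + w)) := by
  set ℓ := log (exp 1 + w)
  have hℓ : 0 < ℓ := lt_of_lt_of_le one_pos (one_le_log_exp_add (by linarith))
  have hsmall : (#((range N).filter (fun r : ℕ => (r : ℝ) ≤ √w)) : ℝ) ≤ √w + 1 := by
    have : #((range N).filter (fun r : ℕ => (r : ℝ) ≤ √w)) ≤ ⌊√w⌋₊ + 1 := by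
      refine (card_le_card fun r hr => ?_).trans (card_range _).le
      simp only [mem_filter, mem_range] at hr ⊢
      exact Nat.lt_succ_of_le (Nat.le_floor hr.2)
    calc (#((range N).filter (fun r : ℕ => (r : ℝ) ≤ √w)) : ℝ) ≤ (⌊√w⌋₊ + 1 : ℕ) := by
          exact_mod_cast this
      _ ≤ √w + 1 := by push_cast; linarith [Nat.floor_le (sqrt_nonneg w)]
  have hlog := log_exp_add_le_four_mul_sqrt hw
  have hroot : √w * √w = w := mul_self_sqrt (by linarith)
  have hkey : (√w + 1) * ℓ ≤ 8 * w := by nlinarith [sqrt_nonneg w]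
  calc ∑ r ∈ range N, (log (exp 1 + r))⁻¹
      ≤ ∑ r ∈ range N, ((if (r : ℝ) ≤ √w then 1 else 0) + 2 / ℓ) :=
        sum_le_sum fun r _ => inv_log_exp_add_le r (by linarith)
    _ = #((range N).filter (fun r : ℕ => (r : ℝ) ≤ √w)) + N * (2 / ℓ) := by
        rw [sum_add_distrib, sum_boole, sum_const, card_range, nsmul_eq_mul]
    _ ≤ (√w + 1) + w * (2 / ℓ) := by gcongr
    _ = ((√w + 1) * ℓ + 2 * w) / ℓ := by field_simp
    _ ≤ 10 * (w / ℓ) := by rw [mul_div_assoc']; gcongr; linarith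

lemma sum_ite_two_rpow_lt_inv_log_le {γ : ℝ} (hγ : 0 < γ) (s : Finset ℕ) (y : ℝ) :
    ∑ r ∈ s, (if (2 : ℝ) ^ (γ * r) < |y| then (log (exp 1 + r))⁻¹ else 0) ≤
      10 * ((γ * log 2)⁻¹ + 1) * (logEAbs y / logEAbs (logEAbs y)) := by
  set a := γ * log 2
  have ha : 0 < a := by positivity
  have hL := one_le_logEAbs y
  set w := (a⁻¹ + 1) * logEAbs y
  have hLw : logEAbs y ≤ w := le_mul_of_one_le_left (by linarith) (by linarith [inv_pos.mpr ha])
  have hsub : s.filter (fun r : ℕ => (2 : ℝ) ^ (γ * r) < |y|) ⊆ range ⌊w⌋₊ := by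
    intro r hr
    have hr := (mem_filter.mp hr).2
    have hra : r * a < logEAbs y :=
      calc r * a = log ((2 : ℝ) ^ (γ * r)) := by rw [log_rpow two_pos]; ring
        _ < log |y| := log_lt_log (by positivity) hr
        _ ≤ logEAbs y :=
          log_le_log ((rpow_pos_of_pos two_pos _).trans hr) (by linarith [exp_pos 1])
    have : (r : ℝ) + 1 ≤ w := by
      have : (r : ℝ) ≤ a⁻¹ * logEAbs y := by
        rw [inv_mul_eq_div, le_div_iff₀ ha]; exact hra.le
      linarith
    exact mem_range.mpr (Nat.lt_of_succ_le (Nat.le_floor (by exact_mod_cast this)))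
  have hLL : logEAbs (logEAbs y) = log (exp 1 + logEAbs y) := by
    rw [logEAbs, abs_of_nonneg (by linarith)]
  calc ∑ r ∈ s, (if (2 : ℝ) ^ (γ * r) < |y| then (log (exp 1 + r))⁻¹ else 0)
      = ∑ r ∈ s.filter (fun r : ℕ => (2 : ℝ) ^ (γ * r) < |y|), (log (exp 1 + r))⁻¹ :=
        (sum_filter _ _).symm
    _ ≤ ∑ r ∈ range ⌊w⌋₊, (log (exp 1 + r))⁻¹ :=
        sum_le_sum_of_subset_of_nonneg hsub fun r _ _ =>
          inv_nonneg.mpr (zero_le_one.trans (one_le_log_exp_add r.cast_nonneg))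
    _ ≤ 10 * (w / log (exp 1 + w)) :=
        sum_range_inv_log_exp_add_le _ (Nat.floor_le (by linarith)) (hL.trans hLw)
    _ ≤ 10 * (w / logEAbs (logEAbs y)) := by
        rw [hLL]
        refine mul_le_mul_of_nonneg_left (div_le_div_of_nonneg_left (by linarith)
          (zero_lt_one.trans_le (one_le_log_exp_add (by linarith))) ?_) (by norm_num)
        exact log_le_log (by positivity) (by linarith)
    _ = 10 * (a⁻¹ + 1) * (logEAbs y / logEAbs (logEAbs y)) := by ring

lemma measurable_tailPart (c : ℝ) : Measurable (tailPart c) :=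
  Measurable.ite (measurableSet_lt measurable_const measurable_abs) measurable_id measurable_const

lemma sq_tailPart_le (c x : ℝ) : tailPart c x ^ 2 ≤ x ^ 2 := by
  unfold tailPart; split_ifs <;> simp [sq_nonneg]

lemma sum_sq_tailPart_div_log_le {γ : ℝ} (hγ : 0 < γ) (s : Finset ℕ) (y : ℝ) :
    ∑ r ∈ s, tailPart (2 ^ (γ * r)) y ^ 2 / log (exp 1 + r) ≤
      10 * ((γ * log 2)⁻¹ + 1) * (y ^ 2 * logEAbs y / logEAbs (logEAbs y)) := by
  have hterm : ∀ r ∈ s, tailPart (2 ^ (γ * r)) y ^ 2 / log (exp 1 + r) =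
      y ^ 2 * (if (2 : ℝ) ^ (γ * r) < |y| then (log (exp 1 + r))⁻¹ else 0) := by
    intro r _
    unfold tailPart
    split_ifs <;> simp [div_eq_mul_inv]
  rw [sum_congr rfl hterm, ← mul_sum]
  calc y ^ 2 * ∑ r ∈ s, (if (2 : ℝ) ^ (γ * r) < |y| then (log (exp 1 + r))⁻¹ else 0)
      ≤ y ^ 2 * (10 * ((γ * log 2)⁻¹ + 1) * (logEAbs y / logEAbs (logEAbs y))) :=
        mul_le_mul_of_nonneg_left (sum_ite_two_rpow_lt_inv_log_le hγ s y) (sq_nonneg y)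
    _ = _ := by ring

lemma summable_integral_sq_tailPart_div_log {Ω : Type*} [MeasurableSpace Ω] {μ : Measure Ω}
    {X : Ω → ℝ} (hX : Measurable X)
    (hmom : Integrable (fun ω => X ω ^ 2 * logEAbs (X ω) / logEAbs (logEAbs (X ω))) μ)
    {γ : ℝ} (hγ : 0 < γ) :
    Summable fun r : ℕ => (∫ ω, tailPart (2 ^ (γ * r)) (X ω) ^ 2 ∂μ) / log (exp 1 + r) := by
  have hint : ∀ c, Integrable (fun ω => tailPart c (X ω) ^ 2) μ := fun c =>
    (hmom.const_mul 2).mono' (((measurable_tailPart c).comp hX).pow_const 2).aestronglyMeasurable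
      (ae_of_all _ fun ω => by
        rw [norm_of_nonneg (sq_nonneg _)]
        exact (sq_tailPart_le c (X ω)).trans (sq_le_two_mul_sq_mul_logEAbs_div (X ω)))
  refine summable_of_sum_le
    (c := ∫ ω, 10 * ((γ * log 2)⁻¹ + 1) *
      (X ω ^ 2 * logEAbs (X ω) / logEAbs (logEAbs (X ω))) ∂μ)
    (fun r => div_nonneg (integral_nonneg fun _ => sq_nonneg _)
      (zero_le_one.trans (one_le_log_exp_add r.cast_nonneg))) fun s => ?_
  simp_rw [← integral_div]
  rw [← integral_finsetSum s fun r _ => (hint _).div_const _]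
  exact integral_mono (integrable_finsetSum s fun r _ => (hint _).div_const _)
    (hmom.const_mul _) fun ω => sum_sq_tailPart_div_log_le hγ s (X ω)

lemma summable_of_le_div_two_pow_log {f g : ℕ → ℝ} (k : ℕ) (hf : ∀ n, 0 ≤ f n)
    (hg0 : ∀ r, 0 ≤ g r) (hg : Summable g)
    (hfg : ∀ n, f n ≤ g (Nat.log 2 (n + k)) / 2 ^ Nat.log 2 (n + k)) : Summable f := by
  refine summable_of_sum_range_le (c := 2 * ∑' r, g r) hf fun N => ?_
  set m : ℕ → ℕ := fun n => Nat.log 2 (n + k)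
  have hfiber : ∀ r, #((range N).filter (fun n => m n = r)) ≤ 2 ^ (r + 1) := fun r => by
    refine (card_le_card fun n hn => ?_).trans (card_range _).le
    rw [mem_filter] at hn
    rw [mem_range, ← hn.2]
    exact (Nat.le_add_right n k).trans_lt (Nat.lt_pow_succ_log_self one_lt_two _)
  calc ∑ n ∈ range N, f n ≤ ∑ n ∈ range N, g (m n) / 2 ^ m n := sum_le_sum fun n _ => hfg n
    _ = ∑ r ∈ (range N).image m, #((range N).filter (fun n => m n = r)) • (g r / 2 ^ r) :=
        sum_comp (fun r => g r / 2 ^ r) m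
    _ ≤ ∑ r ∈ (range N).image m, 2 * g r := sum_le_sum fun r _ => by
        rw [nsmul_eq_mul]
        calc (#((range N).filter (fun n => m n = r)) : ℝ) * (g r / 2 ^ r)
            ≤ (2 ^ (r + 1) : ℕ) * (g r / 2 ^ r) := by
              gcongr
              exacts [div_nonneg (hg0 r) (by positivity), hfiber r]
          _ = 2 * g r := by push_cast; field_simp; ring
    _ ≤ 2 * ∑' r, g r := by
        rw [← mul_sum]; gcongr; exact hg.sum_le_tsum _ fun r _ => hg0 r

lemma log_exp_add_log_two_le (ℓ : ℕ) (hℓ : 4 ≤ ℓ) :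
    log (exp 1 + Nat.log 2 ℓ) ≤ 5 * log (log ℓ) := by
  set r := Nat.log 2 ℓ
  have hr : (2 : ℝ) ≤ r := by
    exact_mod_cast Nat.le_log_of_pow_le one_lt_two (by simpa using hℓ)
  have hrℓ : r * log 2 ≤ log ℓ := by
    rw [← log_pow]
    exact log_le_log (by positivity) (by exact_mod_cast Nat.pow_log_le_self 2 (by omega))
  have hlog2 := log_two_gt_d9
  have hpow : exp 1 + r ≤ (r * log 2) ^ 5 := by
    have h1 : (0.69 * r) ^ 5 ≤ (r * log 2) ^ 5 :=
      pow_le_pow_left₀ (by positivity) (by nlinarith) 5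
    nlinarith [exp_one_lt_d9, pow_le_pow_left₀ (by norm_num) hr 4]
  calc log (exp 1 + r) ≤ log ((r * log 2) ^ 5) := log_le_log (by positivity) hpow
    _ = 5 * log (r * log 2) := by rw [log_pow]; norm_num
    _ ≤ 5 * log (log ℓ) := by gcongr

lemma log_log_pos {ℓ : ℕ} (hℓ : 4 ≤ ℓ) : 0 < log (log ℓ) := by
  linarith [log_exp_add_log_two_le ℓ hℓ,
    one_le_log_exp_add (Nat.cast_nonneg (α := ℝ) (Nat.log 2 ℓ))]

lemma div_mul_log_log_le {A B : ℝ} (hAB : A ≤ B) (hA : 0 ≤ A) {ℓ : ℕ} (hℓ : 4 ≤ ℓ) :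
    A / (ℓ * log (log ℓ)) ≤ 5 * (B / log (exp 1 + Nat.log 2 ℓ)) / 2 ^ Nat.log 2 ℓ := by
  set r := Nat.log 2 ℓ
  have hr := one_le_log_exp_add (Nat.cast_nonneg (α := ℝ) r)
  have hrℓ : (2 : ℝ) ^ r ≤ ℓ := by exact_mod_cast Nat.pow_log_le_self 2 (by omega)
  have hlog : log (exp 1 + r) ≤ 5 * log (log ℓ) := log_exp_add_log_two_le ℓ hℓ
  calc A / (ℓ * log (log ℓ)) ≤ B / (2 ^ r * (log (exp 1 + r) / 5)) := by
        gcongr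
        · linarith
        · linarith
    _ = 5 * (B / log (exp 1 + r)) / 2 ^ r := by field_simp

lemma integral_sq_sub_integral_comp_le {Ω : Type*} [MeasurableSpace Ω] {μ : Measure Ω}
    [IsProbabilityMeasure μ] {X Y : Ω → ℝ} (hXY : IdentDistrib X Y μ μ) {h : ℝ → ℝ}
    (hh : Measurable h) :
    ∫ ω, (h (X ω) - ∫ ω', h (X ω') ∂μ) ^ 2 ∂μ ≤ ∫ ω, h (Y ω) ^ 2 ∂μ :=
  calc ∫ ω, (h (X ω) - ∫ ω', h (X ω') ∂μ) ^ 2 ∂μ = Var[h ∘ X; μ] :=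
        (variance_eq_integral (hh.comp_aemeasurable hXY.aemeasurable_fst)).symm
    _ ≤ ∫ ω, h (X ω) ^ 2 ∂μ :=
        variance_le_expectation_sq
          (hh.comp_aemeasurable hXY.aemeasurable_fst).aestronglyMeasurable
    _ = ∫ ω, h (Y ω) ^ 2 ∂μ := (hXY.comp (hh.pow_const 2)).integral_eq

theorem stmt9 {Ω : Type*} [MeasurableSpace Ω] (μ : Measure Ω) [IsProbabilityMeasure μ]
    (X0 : Ω → ℝ) (X : ℕ → Ω → ℝ)
    (hX0meas : Measurable X0) (hXmeas : ∀ ℓ, Measurable (X ℓ))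
    (hident : ∀ ℓ, Measure.map (X ℓ) μ = Measure.map X0 μ)
    (L : ℝ → ℝ) (hL : ∀ x, L x = Real.log (Real.exp 1 + |x|))
    (hmom : Integrable (fun ω => (X0 ω) ^ 2 * L (X0 ω) / L (L (X0 ω))) μ)
    (γ : ℝ) (hγ : 0 < γ)
    (T Xstar : ℕ → Ω → ℝ)
    (hT : ∀ ℓ ω, T ℓ ω =
      if (2 : ℝ) ^ (γ * (Nat.log 2 ℓ : ℝ)) < |X ℓ ω| then X ℓ ω else 0)
    (hXstar : ∀ ℓ ω, Xstar ℓ ω = T ℓ ω - ∫ ω', T ℓ ω' ∂μ) :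
    Summable (fun n : ℕ =>
      (∫ ω, (Xstar (n + 4) ω) ^ 2 ∂μ) / ((n + 4 : ℝ) * Real.log (Real.log (n + 4 : ℝ)))) := by
  obtain rfl : L = logEAbs := funext hL
  set G : ℕ → ℝ := fun r => ∫ ω, tailPart (2 ^ (γ * r)) (X0 ω) ^ 2 ∂μ
  have hvar : ∀ ℓ, ∫ ω, Xstar ℓ ω ^ 2 ∂μ ≤ G (Nat.log 2 ℓ) := fun ℓ => by
    simp only [hXstar, hT]
    exact integral_sq_sub_integral_comp_le
      ⟨(hXmeas ℓ).aemeasurable, hX0meas.aemeasurable, hident ℓ⟩ (measurable_tailPart _)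
  have hG0 : ∀ r, 0 ≤ 5 * (G r / log (exp 1 + r)) := fun r =>
    mul_nonneg (by norm_num) (div_nonneg (integral_nonneg fun _ => sq_nonneg _)
      (zero_le_one.trans (one_le_log_exp_add r.cast_nonneg)))
  refine summable_of_le_div_two_pow_log 4 (fun n => ?_) hG0
    ((summable_integral_sq_tailPart_div_log hX0meas hmom hγ).mul_left 5) (fun n => ?_)
  · have hℓ : (0 : ℝ) < log (log (n + 4 : ℕ)) := log_log_pos le_add_self
    push_cast at hℓ
    exact div_nonneg (integral_nonneg fun _ => sq_nonneg _) (by positivity)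
  · exact_mod_cast div_mul_log_log_le (hvar (n + 4)) (integral_nonneg fun _ => sq_nonneg _)
      le_add_self
end

section
/- Assume α^{-1}(u) ≤ C u^{-γ/(1-γ)} for some constant C > 0 and γ ∈ (0,1), and let Q be a quantile function with ∫_0^1 (L(Q(u))/L(L(Q(u)))) Q²(u) du < ∞. Then ∫_0^1 (L(α^{-1}(u))/L(L(α^{-1}(u)))) Q²(u) du < ∞. -/
/-!
Write `φ(x) = L(x) / L(L(x))`, which is even and increasing in `|x|`, and put `t = u^{-1/4}`.
The bound on `α⁻¹` gives `α⁻¹(u) ≤ C' t^N`, and `L(c t^N) ≤ (L(c) + N) L(t)` makes `φ` grow at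
most by a constant factor under such powers, so `φ(α⁻¹(u)) ≤ K φ(t)`. Where `|Q(u)| ≥ t` this is
at most `K φ(Q(u))`; elsewhere `Q(u)² < t²` and `φ(t) ≤ 2t`, so the integrand is `O(u^{-3/4})`,
which is integrable on `(0, 1]`.
-/

open MeasureTheory Real Set

noncomputable def logE (x : ℝ) : ℝ := log (exp 1 + |x|)

noncomputable def logRatio (x : ℝ) : ℝ := logE x / logE (logE x)

lemma logE_of_nonneg {x : ℝ} (hx : 0 ≤ x) : logE x = log (exp 1 + x) := by
  rw [logE, abs_of_nonneg hx]

lemma one_le_logE (x : ℝ) : 1 ≤ logE x := by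
  rw [logE, le_log_iff_exp_le (by positivity)]
  linarith [abs_nonneg x]

lemma logE_pos (x : ℝ) : 0 < logE x := one_pos.trans_le (one_le_logE x)

lemma logE_le_logE {x y : ℝ} (h : |x| ≤ |y|) : logE x ≤ logE y :=
  log_le_log (by positivity) (by linarith)

lemma logE_le_logE_of_le {x y : ℝ} (hx : 0 ≤ x) (h : x ≤ y) : logE x ≤ logE y :=
  logE_le_logE (by rwa [abs_of_nonneg hx, abs_of_nonneg (hx.trans h)])

lemma logE_le_one_add {x : ℝ} (hx : 0 ≤ x) : logE x ≤ 1 + x := by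
  rw [logE_of_nonneg hx, log_le_iff_le_exp (by positivity), exp_add]
  nlinarith [mul_le_mul_of_nonneg_left (add_one_le_exp x) (exp_pos 1).le,
    one_le_exp zero_le_one]

lemma logE_mul_rpow_le {c t n : ℝ} (hc : 0 ≤ c) (ht : 0 ≤ t) (hn : 0 ≤ n) :
    logE (c * t ^ n) ≤ logE c + n * logE t := by
  have hpow : (1 : ℝ) ≤ (exp 1 + t) ^ n :=
    one_le_rpow (by linarith [add_one_le_exp (1 : ℝ)]) hn
  have htn : t ^ n ≤ (exp 1 + t) ^ n := rpow_le_rpow ht (by linarith [exp_pos 1]) hn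
  rw [logE_of_nonneg (by positivity), logE_of_nonneg hc, logE_of_nonneg ht,
    ← log_rpow (by positivity), ← log_mul (by positivity) (by positivity)]
  refine log_le_log (by positivity) ?_
  nlinarith [exp_pos 1]

/-- `s / L(s)` is increasing, because `L(t) - L(s) ≤ log (t / s) ≤ (t - s) / s`. -/
lemma div_logE_le_div_logE {s t : ℝ} (hs : 0 < s) (hst : s ≤ t) :
    s / logE s ≤ t / logE t := by
  have ht : 0 < t := hs.trans_le hst
  rw [div_le_div_iff₀ (logE_pos s) (logE_pos t)]
  have hlog : logE t ≤ logE s + log (t / s) := by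
    rw [logE_of_nonneg hs.le, logE_of_nonneg ht.le, ← log_mul (by positivity) (by positivity)]
    refine log_le_log (by positivity) ?_
    have : exp 1 ≤ exp 1 * t / s := by
      rw [le_div_iff₀ hs]
      nlinarith [exp_pos 1]
    have hexp : (exp 1 + s) * (t / s) = exp 1 * t / s + t := by field_simp
    linarith
  have hquot : s * log (t / s) ≤ t - s := by
    calc s * log (t / s) ≤ s * (t / s - 1) :=
          mul_le_mul_of_nonneg_left (log_le_sub_one_of_pos (by positivity)) hs.le
      _ = t - s := by field_simp
  nlinarith [one_le_logE s]

lemma logRatio_le_logRatio_of_le {x y : ℝ} (hx : 0 ≤ x) (h : x ≤ y) :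
    logRatio x ≤ logRatio y :=
  div_logE_le_div_logE (logE_pos x) (logE_le_logE_of_le hx h)

lemma logRatio_abs (x : ℝ) : logRatio |x| = logRatio x := by
  simp only [logRatio, logE, abs_abs]

lemma logRatio_pos (x : ℝ) : 0 < logRatio x := div_pos (logE_pos x) (logE_pos _)

lemma logRatio_le_logE (x : ℝ) : logRatio x ≤ logE x :=
  div_le_self (logE_pos x).le (one_le_logE _)

lemma logRatio_mul_rpow_le {c t n : ℝ} (hc : 1 ≤ c) (ht : 1 ≤ t) (hn : 1 ≤ n) :
    logRatio (c * t ^ n) ≤ (logE c + n) * logRatio t := by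
  have ht_le : t ≤ c * t ^ n :=
    calc t = t ^ (1 : ℝ) := (rpow_one t).symm
      _ ≤ t ^ n := rpow_le_rpow_of_exponent_le ht hn
      _ ≤ c * t ^ n := le_mul_of_one_le_left (by positivity) hc
  have hden : logE (logE t) ≤ logE (logE (c * t ^ n)) :=
    logE_le_logE_of_le (logE_pos t).le (logE_le_logE_of_le (by linarith) ht_le)
  have hnum : logE (c * t ^ n) ≤ (logE c + n) * logE t := by
    have := logE_mul_rpow_le (c := c) (t := t) (n := n) (by linarith) (by linarith) (by linarith)
    nlinarith [one_le_logE c, one_le_logE t]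
  calc logRatio (c * t ^ n) ≤ logE (c * t ^ n) / logE (logE t) :=
        div_le_div_of_nonneg_left (logE_pos _).le (logE_pos _) hden
    _ ≤ (logE c + n) * logE t / logE (logE t) := by gcongr; exact (logE_pos _).le
    _ = (logE c + n) * logRatio t := mul_div_assoc _ _ _

lemma exists_logRatio_le_of_le_mul_rpow_neg (C β : ℝ) :
    ∃ K, 0 ≤ K ∧ ∀ u ∈ Ioc (0 : ℝ) 1, ∀ a : ℝ, 0 ≤ a → a ≤ C * u ^ (-β) →
      logRatio a ≤ K * logRatio (u ^ (-(1 / 4) : ℝ)) := by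
  refine ⟨logE (max C 1) + max (4 * β) 1, by linarith [logE_pos (max C 1), le_max_right (4 * β) 1],
    fun u ⟨hu0, hu1⟩ a ha h => ?_⟩
  set t := u ^ (-(1 / 4) : ℝ)
  have ht : 1 ≤ t := one_le_rpow_of_pos_of_le_one_of_nonpos hu0 hu1 (by norm_num)
  have hpow : u ^ (-β) ≤ t ^ max (4 * β) 1 := by
    have : u ^ (-β) = t ^ (4 * β) := by rw [← rpow_mul hu0.le]; ring_nf
    exact this.trans_le (rpow_le_rpow_of_exponent_le ht (le_max_left _ _))
  have hat : a ≤ max C 1 * t ^ max (4 * β) 1 :=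
    h.trans (mul_le_mul (le_max_left _ _) hpow (by positivity) (by positivity))
  exact (logRatio_le_logRatio_of_le ha hat).trans
    (logRatio_mul_rpow_le (le_max_right _ _) ht (le_max_right _ _))

lemma logRatio_mul_sq_le {a q t K : ℝ} (ht : 1 ≤ t) (hK : 0 ≤ K)
    (ha : logRatio a ≤ K * logRatio t) :
    logRatio a * q ^ 2 ≤ K * (logRatio q * q ^ 2) + 2 * K * t ^ 3 := by
  have hq_nonneg : 0 ≤ K * (logRatio q * q ^ 2) :=
    mul_nonneg hK (mul_nonneg (logRatio_pos q).le (sq_nonneg q))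
  have hat : logRatio a * q ^ 2 ≤ K * logRatio t * q ^ 2 :=
    mul_le_mul_of_nonneg_right ha (sq_nonneg q)
  rcases le_or_gt t |q| with hq | hq
  · have htq : logRatio t ≤ logRatio q := by
      rw [← logRatio_abs q]
      exact logRatio_le_logRatio_of_le (by linarith) hq
    calc logRatio a * q ^ 2 ≤ K * logRatio t * q ^ 2 := hat
      _ ≤ K * (logRatio q * q ^ 2) := by rw [mul_assoc]; gcongr
      _ ≤ K * (logRatio q * q ^ 2) + 2 * K * t ^ 3 := le_add_of_nonneg_right (by positivity)
  · have hqt : q ^ 2 ≤ t ^ 2 := by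
      rw [← sq_abs]
      exact pow_le_pow_left₀ (abs_nonneg q) hq.le 2
    have hlt : logRatio t ≤ 2 * t :=
      (logRatio_le_logE t).trans ((logE_le_one_add (by linarith)).trans (by linarith))
    calc logRatio a * q ^ 2 ≤ K * logRatio t * q ^ 2 := hat
      _ ≤ K * (2 * t) * t ^ 2 := by gcongr
      _ = 2 * K * t ^ 3 := by ring
      _ ≤ K * (logRatio q * q ^ 2) + 2 * K * t ^ 3 := le_add_of_nonneg_left hq_nonneg

lemma lintegral_ofReal_lt_top_of_le_mul_add {α : Type*} [MeasurableSpace α] {μ : Measure α}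
    {f g h : α → ℝ} {K : ℝ} (hK : 0 ≤ K) (hle : ∀ᵐ x ∂μ, f x ≤ K * g x + h x)
    (hg : ∫⁻ x, ENNReal.ofReal (g x) ∂μ < ⊤) (hh : Integrable h μ) :
    ∫⁻ x, ENNReal.ofReal (f x) ∂μ < ⊤ := by
  calc ∫⁻ x, ENNReal.ofReal (f x) ∂μ
      ≤ ∫⁻ x, ENNReal.ofReal K * ENNReal.ofReal (g x) + ENNReal.ofReal (h x) ∂μ := by
        refine lintegral_mono_ae (hle.mono fun x hx => ?_)
        rw [← ENNReal.ofReal_mul hK]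
        exact (ENNReal.ofReal_le_ofReal hx).trans ENNReal.ofReal_add_le
    _ = ENNReal.ofReal K * ∫⁻ x, ENNReal.ofReal (g x) ∂μ + ∫⁻ x, ENNReal.ofReal (h x) ∂μ := by
        rw [lintegral_add_right' _ hh.aemeasurable.ennreal_ofReal,
          lintegral_const_mul' _ _ ENNReal.ofReal_ne_top]
    _ < ⊤ := ENNReal.add_lt_top.2 ⟨ENNReal.mul_lt_top ENNReal.ofReal_lt_top hg, hh.lintegral_lt_top⟩

theorem stmt11_general (C γ : ℝ)
    (αinv : ℝ → ℕ)
    (hαinv : ∀ u ∈ Ioc (0:ℝ) 1, (αinv u : ℝ) ≤ C * u ^ (-(γ / (1 - γ))))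
    (Q : ℝ → ℝ)
    (L : ℝ → ℝ) (hL : ∀ x, L x = Real.log (Real.exp 1 + |x|))
    (hint : ∫⁻ u in Ioc (0:ℝ) 1,
        ENNReal.ofReal ((L (Q u) / L (L (Q u))) * Q u ^ 2) < ⊤) :
    ∫⁻ u in Ioc (0:ℝ) 1,
        ENNReal.ofReal ((L (αinv u) / L (L (αinv u))) * Q u ^ 2) < ⊤ := by
  obtain rfl : L = logE := funext hL
  obtain ⟨K, hK, hαK⟩ := exists_logRatio_le_of_le_mul_rpow_neg C (γ / (1 - γ))
  have hrpow : IntegrableOn (fun u : ℝ => 2 * K * u ^ (-(3 / 4) : ℝ)) (Ioc 0 1) :=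
    ((intervalIntegrable_iff_integrableOn_Ioc_of_le zero_le_one).1
      (intervalIntegral.intervalIntegrable_rpow' (by norm_num))).const_mul _
  refine lintegral_ofReal_lt_top_of_le_mul_add hK (g := fun u => logRatio (Q u) * Q u ^ 2)
    ?_ hint hrpow
  filter_upwards [ae_restrict_mem measurableSet_Ioc] with u hu
  have ht : 1 ≤ u ^ (-(1 / 4) : ℝ) := one_le_rpow_of_pos_of_le_one_of_nonpos hu.1 hu.2 (by norm_num)
  have hcube : (u ^ (-(1 / 4) : ℝ)) ^ 3 = u ^ (-(3 / 4) : ℝ) := by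
    rw [← rpow_natCast, ← rpow_mul hu.1.le]
    norm_num
  rw [← hcube]
  exact logRatio_mul_sq_le (q := Q u) ht hK (hαK u hu _ (Nat.cast_nonneg _) (hαinv u hu))

theorem stmt11 (C γ : ℝ) (hC : 0 < C) (hγ : γ ∈ Ioo (0:ℝ) 1)
    (αinv : ℝ → ℕ)
    (hαinv : ∀ u ∈ Ioc (0:ℝ) 1, (αinv u : ℝ) ≤ C * u ^ (-(γ / (1 - γ))))
    (Q : ℝ → ℝ) (hQpos : ∀ u ∈ Ioc (0:ℝ) 1, 0 ≤ Q u)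
    (hQmono : AntitoneOn Q (Ioc (0:ℝ) 1))
    (L : ℝ → ℝ) (hL : ∀ x, L x = Real.log (Real.exp 1 + |x|))
    (hint : ∫⁻ u in Ioc (0:ℝ) 1,
        ENNReal.ofReal ((L (Q u) / L (L (Q u))) * Q u ^ 2) < ⊤) :
    ∫⁻ u in Ioc (0:ℝ) 1,
        ENNReal.ofReal ((L (αinv u) / L (L (αinv u))) * Q u ^ 2) < ⊤ :=
  stmt11_general C γ αinv hαinv Q L hL hint
end

section
/- Let T be a linear contraction on a Hilbert space H and x ∈ H with sup_{n≥1} ‖∑_{k=0}^n T^k x‖ < ∞. Then there exists z ∈ H such that x = z − T z. -/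
/-!
The Cesàro means `zₙ = (n+1)⁻¹ ∑_{j ≤ n} sⱼ` of the partial sums `sⱼ = ∑_{k ≤ j} Tᵏ x` stay in
the ball of radius `sup ‖sⱼ‖`, and `(1 - T) zₙ = x + (n+1)⁻¹ (x - sₙ₊₁) → x`. By Banach–Alaoglu
and the Riesz representation, `(zₙ)` has a weak cluster point `w`, and since `1 - T` is weakly
continuous, `w - T w = x`.
-/

open Filter Topology Finset

theorem one_sub_mul_sum_range_geom_sum {R : Type*} [Ring R] (a : R) (n : ℕ) :
    (1 - a) * ∑ j ∈ range n, ∑ k ∈ range (j + 1), a ^ k = n + 1 - ∑ k ∈ range (n + 1), a ^ k := by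
  rw [mul_sum]
  simp only [mul_neg_geom_sum, sum_sub_distrib, sum_const, card_range, nsmul_one,
    sum_range_succ' (a ^ ·) n, pow_zero]
  abel

section Cesaro

variable {𝕜 E : Type*} [RCLike 𝕜] [NormedAddCommGroup E] [NormedSpace 𝕜 E]

theorem norm_inv_natCast_add_one_smul_sum_range_le {s : ℕ → E} {M : ℝ} (hs : ∀ j, ‖s j‖ ≤ M)
    (n : ℕ) : ‖((n : 𝕜) + 1)⁻¹ • ∑ j ∈ range (n + 1), s j‖ ≤ M := by
  have hsum : ‖∑ j ∈ range (n + 1), s j‖ ≤ (n + 1) * M :=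
    (norm_sum_le _ _).trans ((sum_le_sum fun j _ => hs j).trans_eq (by simp))
  have hn : ‖(n : 𝕜) + 1‖ = n + 1 := by exact_mod_cast RCLike.norm_natCast (K := 𝕜) (n + 1)
  rw [norm_smul, norm_inv, hn, inv_mul_le_iff₀ (by positivity)]
  exact hsum

theorem one_sub_apply_cesaro_neumann_sum (T : E →L[𝕜] E) (x : E) (n : ℕ) :
    (1 - T) (((n : 𝕜) + 1)⁻¹ • ∑ j ∈ range (n + 1), ∑ k ∈ range (j + 1), (T ^ k) x) =
      x + ((n : 𝕜) + 1)⁻¹ • (x - ∑ k ∈ range (n + 2), (T ^ k) x) := by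
  have h := congrArg (· x) (one_sub_mul_sum_range_geom_sum T (n + 1))
  simp only [mul_apply_eq_comp, _root_.sum_apply] at h
  rw [map_smul, h]
  simp only [sub_apply, add_apply, one_apply_eq_self, ContinuousLinearMap.natCast_apply,
    _root_.sum_apply]
  rw [add_sub_assoc, smul_add, ← Nat.cast_smul_eq_nsmul 𝕜, smul_smul,
    Nat.cast_add_one, inv_mul_cancel₀ (Nat.cast_add_one_ne_zero n), one_smul]

theorem tendsto_one_sub_apply_cesaro_neumann_sum (T : E →L[𝕜] E) (x : E) {M : ℝ}
    (hM : ∀ n, ‖∑ k ∈ range (n + 1), (T ^ k) x‖ ≤ M) :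
    Tendsto (fun n : ℕ => (1 - T) (((n : 𝕜) + 1)⁻¹ •
      ∑ j ∈ range (n + 1), ∑ k ∈ range (j + 1), (T ^ k) x)) atTop (𝓝 x) := by
  simp only [one_sub_apply_cesaro_neumann_sum]
  have hbdd : IsBoundedUnder (· ≤ ·) atTop fun n : ℕ => ‖x - ∑ k ∈ range (n + 2), (T ^ k) x‖ :=
    isBoundedUnder_of ⟨‖x‖ + M, fun n => (norm_sub_le _ _).trans (by gcongr; exact hM (n + 1))⟩
  have hc : Tendsto (fun n : ℕ => ((n : 𝕜) + 1)⁻¹) atTop (𝓝 0) := by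
    simpa only [one_div] using tendsto_one_div_add_atTop_nhds_zero_nat (𝕜 := 𝕜)
  simpa only [add_zero] using tendsto_const_nhds.add (hc.zero_smul_isBoundedUnder_le hbdd)

end Cesaro

theorem MapClusterPt.eq_of_tendsto {X α : Type*} [TopologicalSpace X] [T2Space X] {x y : X}
    {l : Filter α} {u : α → X} (hx : MapClusterPt x l u) (hy : Tendsto u l (𝓝 y)) : x = y :=
  eq_of_nhds_neBot (hx.neBot.mono (inf_le_inf_left _ hy))

theorem ContinuousLinearMap.apply_eq_of_mapClusterPt_toWeakSpace {𝕜 E F ι : Type*} [RCLike 𝕜]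
    [NormedAddCommGroup E] [NormedSpace 𝕜 E] [NormedAddCommGroup F] [NormedSpace 𝕜 F]
    (S : E →L[𝕜] F) {l : Filter ι} {z : ι → E} {w : E} {y : F}
    (hw : MapClusterPt (toWeakSpace 𝕜 E w) l (toWeakSpace 𝕜 E ∘ z))
    (hy : Tendsto (S ∘ z) l (𝓝 y)) : S w = y :=
  (hw.continuousAt_comp (WeakSpace.map S).continuous.continuousAt).eq_of_tendsto
    (((toWeakSpaceCLM 𝕜 F).continuous.tendsto y).comp hy)

open InnerProductSpace in
theorem exists_mapClusterPt_toWeakSpace_of_norm_le {𝕜 H ι : Type*} [RCLike 𝕜]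
    [NormedAddCommGroup H] [InnerProductSpace 𝕜 H] [CompleteSpace H] {l : Filter ι} [l.NeBot]
    {z : ι → H} {M : ℝ} (hz : ∀ i, ‖z i‖ ≤ M) :
    ∃ w : H, MapClusterPt (toWeakSpace 𝕜 H w) l (toWeakSpace 𝕜 H ∘ z) := by
  let D := toDual 𝕜 H
  have hmem : ∀ i, StrongDual.toWeakDual (D (z i)) ∈
      WeakDual.toStrongDual ⁻¹' Metric.closedBall (0 : StrongDual 𝕜 H) M := fun i => by
    simpa using hz i
  obtain ⟨ψ, -, hψ⟩ := (WeakDual.isCompact_closedBall (𝕜 := 𝕜) (E := H) 0 M).exists_clusterPt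
    (f := l.map fun i => StrongDual.toWeakDual (D (z i)))
    (le_principal_iff.2 (eventually_map.2 (Eventually.of_forall hmem)))
  have hcont : Continuous fun ρ : WeakDual 𝕜 H => toWeakSpace 𝕜 H (D.symm ρ.toStrongDual) := by
    refine WeakBilin.continuous_of_continuous_eval _ fun f => ?_
    have h : ∀ ρ : WeakDual 𝕜 H, f (D.symm ρ.toStrongDual) = starRingEnd 𝕜 (ρ (D.symm f)) :=
      fun ρ => by
        rw [← toDual_symm_apply (y := f), ← inner_conj_symm, toDual_symm_apply]; rfl
    exact ((RCLike.continuous_conj (K := 𝕜)).comp (WeakDual.eval_continuous (D.symm f))).congr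
      fun ρ => (h ρ).symm
  refine ⟨D.symm ψ.toStrongDual, ?_⟩
  convert (show MapClusterPt ψ l _ from hψ).continuousAt_comp hcont.continuousAt using 2
  ext i
  simp [D]

theorem stmt14_general {H : Type*} [NormedAddCommGroup H] [InnerProductSpace ℂ H] [CompleteSpace H]
    (T : H →L[ℂ] H) (x : H)
    (hbdd : BddAbove (Set.range fun n : ℕ => ‖∑ k ∈ Finset.range (n + 1), (T ^ k) x‖)) :
    ∃ z : H, x = z - T z := by
  obtain ⟨M, hM⟩ := hbdd
  have hs : ∀ n, ‖∑ k ∈ range (n + 1), (T ^ k) x‖ ≤ M := fun n => hM ⟨n, rfl⟩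
  obtain ⟨w, hw⟩ := exists_mapClusterPt_toWeakSpace_of_norm_le (𝕜 := ℂ) (l := atTop)
    (norm_inv_natCast_add_one_smul_sum_range_le (𝕜 := ℂ) hs)
  exact ⟨w, ((1 - T).apply_eq_of_mapClusterPt_toWeakSpace hw
    (tendsto_one_sub_apply_cesaro_neumann_sum T x hs)).symm⟩

theorem stmt14 {H : Type*} [NormedAddCommGroup H] [InnerProductSpace ℂ H] [CompleteSpace H]
    (T : H →L[ℂ] H) (hT : ‖T‖ ≤ 1) (x : H)
    (hbdd : BddAbove (Set.range fun n : ℕ => ‖∑ k ∈ Finset.range (n + 1), (T ^ k) x‖)) :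
    ∃ z : H, x = z - T z :=
  stmt14_general T x hbdd
end
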